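/- Every finitely branchable Banach lattice is separable, and is the closure of an increasing union of finite dimensional sublattices. -/

import Mathlib

open TopologicalSpace

/-- A Banach lattice is finitely branchable if it admits a linearly dense finitely
branching tree of positive elements: the children of each node are pairwise disjoint and
sum to their parent. -/
def FinitelyBranchable (E : Type*) [NormedAddCommGroup E] [Lattice E] [HasSolidNorm E] [IsOrderedAddMonoid E] [NormedSpace ℝ E] : Prop :=
  ∃ (A : ℕ → Type) (_ : ∀ n, Fintype (A n)) (_ : ∀ n, Nonempty (A n))
    (x : (Σ k : ℕ, ∀ i : Fin k, A i) → E),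
    (∀ σ, 0 ≤ x σ) ∧
    (∀ (k : ℕ) (σ : ∀ i : Fin k, A i),
      x ⟨k, σ⟩ = ∑ b : A k, x ⟨k + 1, Fin.snoc σ b⟩) ∧
    (∀ (k : ℕ) (σ : ∀ i : Fin k, A i) (b b' : A k), b ≠ b' →
      x ⟨k + 1, Fin.snoc σ b⟩ ⊓ x ⟨k + 1, Fin.snoc σ b'⟩ = 0) ∧
    Dense (Submodule.span ℝ (Set.range x) : Set E)

/-!
The `n`-th level of the tree consists of pairwise disjoint positive vectors (distinct nodes lie
below disjoint ancestors), so the positive part of `∑ c σ • x σ` is `∑ (c σ)⁺ • x σ`, and the span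
`F n` of the level is a finite dimensional sublattice. The `F n` increase because each node is the
sum of its children, and their union contains the span of the tree, which is dense; since the tree
is countable, `E` is separable.
-/

section LatticeOrderedGroup

variable {α : Type*} [AddCommGroup α] [Lattice α] [IsOrderedAddMonoid α] {a b c : α}

theorem add_inf_eq_zero (hac : a ⊓ c = 0) (hbc : b ⊓ c = 0) : (a + b) ⊓ c = 0 := by
  have ha : 0 ≤ a := hac ▸ inf_le_left
  calc (a + b) ⊓ c = (a + b) ⊓ ((a + c) ⊓ c) := by
        rw [inf_eq_right.2 (le_add_of_nonneg_left ha)]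
    _ = (a + b ⊓ c) ⊓ c := by rw [add_inf, inf_assoc]
    _ = 0 := by rw [hbc, add_zero, hac]

theorem Finset.sum_inf_eq_zero {ι : Type*} {s : Finset ι} {f : ι → α} (hc : 0 ≤ c)
    (h : ∀ i ∈ s, f i ⊓ c = 0) : (∑ i ∈ s, f i) ⊓ c = 0 := by
  classical
  induction s using Finset.induction_on with
  | empty => simpa using hc
  | insert i s hi ih =>
    rw [Finset.sum_insert hi]
    exact add_inf_eq_zero (h i (Finset.mem_insert_self i s))
      (ih fun j hj => h j (Finset.mem_insert_of_mem hj))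

theorem posPart_sub_eq_self_of_inf_eq_zero (h : a ⊓ b = 0) : (a - b)⁺ = a := by
  rw [posPart_def, ← sub_self b, ← sup_sub, ← add_sub_cancel_right (a ⊔ b) (a ⊓ b), add_comm,
    inf_add_sup, h, sub_zero, add_sub_cancel_right]

theorem nonneg_of_two_pow_nsmul_nonneg : ∀ k : ℕ, 0 ≤ 2 ^ k • a → 0 ≤ a
  | 0, h => by simpa using h
  | k + 1, h =>
    nonneg_of_two_pow_nsmul_nonneg k (nsmul_two_semiclosed (by rwa [← mul_nsmul', ← pow_succ']))

theorem sup_mem_of_forall_posPart_mem {S : Type*} [SetLike S α] [AddSubgroupClass S α] {G : S}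
    (hG : ∀ z ∈ G, z⁺ ∈ G) (ha : a ∈ G) (hb : b ∈ G) : a ⊔ b ∈ G := by
  rw [sup_eq_add_posPart_sub]
  exact add_mem hb (hG _ (sub_mem ha hb))

theorem inf_mem_of_forall_posPart_mem {S : Type*} [SetLike S α] [AddSubgroupClass S α] {G : S}
    (hG : ∀ z ∈ G, z⁺ ∈ G) (ha : a ∈ G) (hb : b ∈ G) : a ⊓ b ∈ G := by
  rw [inf_eq_sub_posPart_sub]
  exact sub_mem ha (hG _ (sub_mem ha hb))

end LatticeOrderedGroup

section OrderedModule

variable {𝕜 β : Type*} [Field 𝕜] [LinearOrder 𝕜] [IsStrictOrderedRing 𝕜]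
  [AddCommGroup β] [Lattice β] [IsOrderedAddMonoid β] [Module 𝕜 β] [IsOrderedModule 𝕜 β]

theorem smul_inf_smul_eq_zero {a b : β} (h : a ⊓ b = 0) {s t : 𝕜} (hs : 0 ≤ s) (ht : 0 ≤ t) :
    s • a ⊓ t • b = 0 := by
  have ha : 0 ≤ a := h ▸ inf_le_left
  have hb : 0 ≤ b := h ▸ inf_le_right
  rcases (add_nonneg hs ht).eq_or_lt with hst | hst
  · obtain ⟨rfl, rfl⟩ := (add_eq_zero_iff_of_nonneg hs ht).1 hst.symm
    simp
  refine le_antisymm ?_ (le_inf (smul_nonneg hs ha) (smul_nonneg ht hb))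
  calc s • a ⊓ t • b ≤ (s + t) • a ⊓ (s + t) • b :=
        inf_le_inf (smul_le_smul_of_nonneg_right (le_add_of_nonneg_right ht) ha)
          (smul_le_smul_of_nonneg_right (le_add_of_nonneg_left hs) hb)
    _ = (s + t) • (a ⊓ b) := ((OrderIso.smulRight hst).map_inf a b).symm
    _ = 0 := by rw [h, smul_zero]

theorem posPart_sum_smul_of_pairwise_inf_eq_zero {ι : Type*} [Fintype ι] {e : ι → β}
    (he : ∀ i, 0 ≤ e i) (hd : Pairwise fun i j => e i ⊓ e j = 0) (c : ι → 𝕜) :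
    (∑ i, c i • e i)⁺ = ∑ i, (c i)⁺ • e i := by
  have hsplit : ∑ i, c i • e i = ∑ i, (c i)⁺ • e i - ∑ i, (c i)⁻ • e i := by
    simp only [← Finset.sum_sub_distrib, ← sub_smul, posPart_sub_negPart]
  have hterm : ∀ i j, (c i)⁺ • e i ⊓ (c j)⁻ • e j = 0 := by
    intro i j
    rcases eq_or_ne i j with rfl | hij
    · rcases le_total (c i) 0 with hci | hci
      · rw [posPart_eq_zero.2 hci, zero_smul]
        exact inf_eq_left.2 (smul_nonneg (negPart_nonneg _) (he i))
      · rw [negPart_eq_zero.2 hci, zero_smul]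
        exact inf_eq_right.2 (smul_nonneg (posPart_nonneg _) (he i))
    · exact smul_inf_smul_eq_zero (hd hij) (posPart_nonneg _) (negPart_nonneg _)
  rw [hsplit, posPart_sub_eq_self_of_inf_eq_zero]
  refine Finset.sum_inf_eq_zero
    (Finset.sum_nonneg fun j _ => smul_nonneg (negPart_nonneg _) (he j)) fun i _ => ?_
  rw [inf_comm]
  refine Finset.sum_inf_eq_zero (smul_nonneg (posPart_nonneg _) (he i)) fun j _ => ?_
  rw [inf_comm]
  exact hterm i j

theorem posPart_mem_span_of_pairwise_inf_eq_zero {ι : Type*} [Finite ι] {e : ι → β}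
    (he : ∀ i, 0 ≤ e i) (hd : Pairwise fun i j => e i ⊓ e j = 0) {z : β}
    (hz : z ∈ Submodule.span 𝕜 (Set.range e)) : z⁺ ∈ Submodule.span 𝕜 (Set.range e) := by
  have := Fintype.ofFinite ι
  obtain ⟨c, rfl⟩ := (Submodule.mem_span_range_iff_exists_fun 𝕜).1 hz
  rw [posPart_sum_smul_of_pairwise_inf_eq_zero he hd]
  exact Submodule.sum_mem _ fun i _ => Submodule.smul_mem _ _ (Submodule.subset_span ⟨i, rfl⟩)

end OrderedModule

section BanachLattice

variable {E : Type*} [NormedAddCommGroup E] [Lattice E] [HasSolidNorm E] [IsOrderedAddMonoid E]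
  [NormedSpace ℝ E]

-- No compatibility of the order with real scalars is assumed; it comes from halving in a
-- lattice-ordered group (dyadic multiples of `a` are positive) and the closed positive cone.
theorem smul_nonneg_of_hasSolidNorm {r : ℝ} (hr : 0 ≤ r) {a : E} (ha : 0 ≤ a) : 0 ≤ r • a := by
  have hdyadic : ∀ k : ℕ, 0 ≤ ((⌊r * 2 ^ k⌋₊ : ℝ) / 2 ^ k) • a := fun k => by
    refine nonneg_of_two_pow_nsmul_nonneg k ?_
    rw [← Nat.cast_smul_eq_nsmul ℝ, smul_smul, Nat.cast_pow, Nat.cast_ofNat,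
      mul_div_cancel₀ _ (by positivity), Nat.cast_smul_eq_nsmul]
    exact nsmul_nonneg ha _
  have hlim : Filter.Tendsto (fun k : ℕ => (⌊r * 2 ^ k⌋₊ : ℝ) / 2 ^ k) Filter.atTop (nhds r) :=
    (tendsto_nat_floor_mul_div_atTop hr).comp (tendsto_pow_atTop_atTop_of_one_lt one_lt_two)
  exact isClosed_nonneg.mem_of_tendsto (hlim.smul_const a) (Filter.Eventually.of_forall hdyadic)

instance : IsOrderedModule ℝ E :=
  .of_smul_nonneg fun _ hr _ ha => smul_nonneg_of_hasSolidNorm hr ha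

end BanachLattice

structure IsDisjointTree {α : Type*} [AddCommGroup α] [Lattice α] {A : ℕ → Type*}
    [∀ n, Fintype (A n)] (x : (Σ k : ℕ, ∀ i : Fin k, A i) → α) : Prop where
  nonneg : ∀ σ, 0 ≤ x σ
  eq_sum_children : ∀ (k : ℕ) (σ : ∀ i : Fin k, A i), x ⟨k, σ⟩ = ∑ b, x ⟨k + 1, Fin.snoc σ b⟩
  children_inf_eq_zero : ∀ (k : ℕ) (σ : ∀ i : Fin k, A i) (b b' : A k), b ≠ b' →
    x ⟨k + 1, Fin.snoc σ b⟩ ⊓ x ⟨k + 1, Fin.snoc σ b'⟩ = 0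

namespace IsDisjointTree

variable {α : Type*} [AddCommGroup α] [Lattice α] {A : ℕ → Type*} [∀ n, Fintype (A n)]
  {x : (Σ k : ℕ, ∀ i : Fin k, A i) → α}

theorem monotone_span_level (R : Type*) [Semiring R] [Module R α] (hx : IsDisjointTree x) :
    Monotone fun n => Submodule.span R (Set.range fun σ : (∀ i : Fin n, A i) => x ⟨n, σ⟩) := by
  refine monotone_nat_of_le_succ fun n => Submodule.span_le.2 ?_
  rintro _ ⟨σ, rfl⟩
  change x ⟨n, σ⟩ ∈ _
  rw [hx.eq_sum_children n σ]
  exact Submodule.sum_mem _ fun b _ => Submodule.subset_span ⟨Fin.snoc σ b, rfl⟩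

variable [IsOrderedAddMonoid α]

theorem child_le (hx : IsDisjointTree x) {n : ℕ} (σ : ∀ i : Fin n, A i) (b : A n) :
    x ⟨n + 1, Fin.snoc σ b⟩ ≤ x ⟨n, σ⟩ := by
  rw [hx.eq_sum_children n σ]
  exact Finset.single_le_sum (f := fun b => x ⟨n + 1, Fin.snoc σ b⟩) (fun _ _ => hx.nonneg _)
    (Finset.mem_univ b)

theorem pairwise_level (hx : IsDisjointTree x) (n : ℕ) :
    Pairwise fun σ τ : (∀ i : Fin n, A i) => x ⟨n, σ⟩ ⊓ x ⟨n, τ⟩ = 0 := by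
  induction n with
  | zero => exact fun σ τ h => absurd (Subsingleton.elim σ τ) h
  | succ n ih =>
    intro σ τ hστ
    by_cases hinit : Fin.init σ = Fin.init τ
    · have hlast : σ (Fin.last n) ≠ τ (Fin.last n) := fun h =>
        hστ (by rw [← Fin.snoc_init_self σ, ← Fin.snoc_init_self τ, hinit, h])
      have := hx.children_inf_eq_zero n (Fin.init σ) _ _ hlast
      rwa [Fin.snoc_init_self, hinit, Fin.snoc_init_self] at this
    · rw [← Fin.snoc_init_self σ, ← Fin.snoc_init_self τ]
      exact le_antisymm ((inf_le_inf (hx.child_le _ _) (hx.child_le _ _)).trans (ih hinit).le)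
        (le_inf (hx.nonneg _) (hx.nonneg _))

end IsDisjointTree

theorem stmt13_general {E : Type*} [NormedAddCommGroup E] [Lattice E] [HasSolidNorm E] [IsOrderedAddMonoid E] [NormedSpace ℝ E]
    (hE : FinitelyBranchable E) :
    SeparableSpace E ∧
    ∃ F : ℕ → Submodule ℝ E,
      Monotone F ∧
      (∀ n, FiniteDimensional ℝ (F n)) ∧
      (∀ n, ∀ x y : E, x ∈ F n → y ∈ F n → x ⊓ y ∈ F n) ∧
      (∀ n, ∀ x y : E, x ∈ F n → y ∈ F n → x ⊔ y ∈ F n) ∧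
      Dense (⋃ n, (F n : Set E)) := by
  obtain ⟨A, _, -, x, hpos, hsum, hdisj, hdense⟩ := hE
  have hx : IsDisjointTree x := ⟨hpos, hsum, hdisj⟩
  set F := fun n => Submodule.span ℝ (Set.range fun σ : (∀ i : Fin n, A i) => x ⟨n, σ⟩)
  have hmono : Monotone F := hx.monotone_span_level ℝ
  have hposPart : ∀ n, ∀ z ∈ F n, z⁺ ∈ F n := fun n _ =>
    posPart_mem_span_of_pairwise_inf_eq_zero (fun _ => hpos _) (hx.pairwise_level n)
  have hspan : (Submodule.span ℝ (Set.range x) : Set E) ⊆ ⋃ n, (F n : Set E) := by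
    rw [← Submodule.coe_iSup_of_directed F hmono.directed_le, SetLike.coe_subset_coe]
    exact Submodule.span_le.2 fun _ ⟨⟨n, σ⟩, hσ⟩ =>
      Submodule.mem_iSup_of_mem n (Submodule.subset_span ⟨σ, hσ⟩)
  have hsep : IsSeparable (Set.univ : Set E) := by
    simpa [hdense.closure_eq] using ((Set.countable_range x).isSeparable.span (R := ℝ)).closure
  exact ⟨isSeparable_univ_iff.1 hsep, F, hmono,
    fun n => FiniteDimensional.span_of_finite ℝ (Set.finite_range _),
    fun n _ _ => inf_mem_of_forall_posPart_mem (hposPart n),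
    fun n _ _ => sup_mem_of_forall_posPart_mem (hposPart n), hdense.mono hspan⟩

/-- Every finitely branchable Banach lattice is separable and is the closure of an
increasing union of finite dimensional sublattices. -/
theorem stmt13 {E : Type*} [NormedAddCommGroup E] [Lattice E] [HasSolidNorm E] [IsOrderedAddMonoid E] [NormedSpace ℝ E] [CompleteSpace E]
    (hE : FinitelyBranchable E) :
    SeparableSpace E ∧
    ∃ F : ℕ → Submodule ℝ E,
      Monotone F ∧
      (∀ n, FiniteDimensional ℝ (F n)) ∧
      (∀ n, ∀ x y : E, x ∈ F n → y ∈ F n → x ⊓ y ∈ F n) ∧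
      (∀ n, ∀ x y : E, x ∈ F n → y ∈ F n → x ⊔ y ∈ F n) ∧
      Dense (⋃ n, (F n : Set E)) :=
  stmt13_general hE
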